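/- arXiv:2311.15704 — 4 statements merged into one kernel-verified Lean document; each statement's English description precedes it below -/
import Mathlib

section
/- Let f : [0,∞]^k → [0,∞] be a tropical power series, f(x) = inf over n ∈ ℕ^k of (n·x + c(n)) for a coefficient vector c : ℕ^k → [0,∞]. For every ε with 0 < ε < ∞, there exists a finite set F ⊆ ℕ^k such that f coincides on [ε,∞]^k with the tropical polynomial P(x) = min over n ∈ F of (n·x + c(n)). (Convention: min over the empty set is +∞.) -/
/-!
Write `term c n x = n·x + c n`. Raising `y` to `x = y + d` adds `n·d` to `term c n`, which is at
least the `m·d` it adds to `term c m` when `m ≤ n` coordinatewise; so a monomial that wins against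
`n` at the diagonal point `(ε,…,ε)` keeps winning on all of `[ε,∞]^k`. By Dickson's lemma the set
of minimal exponents among those with `c n < ∞` is finite; their values at `(ε,…,ε)` are bounded
by some `N·ε`, and every exponent `n` outside the box `n ≤ (N,…,N)` has value at least `N·ε`
there, so it is dominated by a minimal exponent below it. Hence the minimal exponents together
with the box suffice.
-/

open scoped ENNReal
open Finset

theorem iInf_eq_finset_inf_of_forall_exists_le {α ι : Type*} [CompleteLattice α] {f : ι → α}
    {s : Finset ι} (h : ∀ i, f i ≠ ⊤ → ∃ j ∈ s, f j ≤ f i) : ⨅ i, f i = s.inf f := by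
  refine le_antisymm (Finset.le_inf fun j _ => iInf_le f j) (le_iInf fun i => ?_)
  by_cases hi : f i = ⊤
  · exact hi ▸ le_top
  · obtain ⟨j, hj, hji⟩ := h i hi
    exact (Finset.inf_le hj).trans hji

namespace TropicalPowerSeries

variable {k : ℕ} (c : (Fin k → ℕ) → ℝ≥0∞)

noncomputable def term (n : Fin k → ℕ) (x : Fin k → ℝ≥0∞) : ℝ≥0∞ :=
  (∑ i, (n i : ℝ≥0∞) * x i) + c n

lemma term_add (n : Fin k → ℕ) (y d : Fin k → ℝ≥0∞) :
    term c n (y + d) = term c n y + ∑ i, (n i : ℝ≥0∞) * d i := by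
  simp only [term, Pi.add_apply, mul_add, sum_add_distrib]
  exact add_right_comm _ _ _

lemma term_eq_top {n : Fin k → ℕ} (x : Fin k → ℝ≥0∞) (hn : c n = ⊤) : term c n x = ⊤ := by
  simp [term, hn]

lemma term_ne_top {n : Fin k → ℕ} {x : Fin k → ℝ≥0∞} (hx : ∀ i, x i ≠ ⊤) (hn : c n ≠ ⊤) :
    term c n x ≠ ⊤ :=
  ENNReal.add_ne_top.2
    ⟨ENNReal.sum_ne_top.2 fun i _ => ENNReal.mul_ne_top (ENNReal.natCast_ne_top _) (hx i), hn⟩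

lemma term_le_term_of_le {m n : Fin k → ℕ} {x y : Fin k → ℝ≥0∞} (hmn : m ≤ n) (hyx : y ≤ x)
    (h : term c m y ≤ term c n y) : term c m x ≤ term c n x := by
  obtain ⟨d, rfl⟩ := exists_add_of_le hyx
  rw [term_add, term_add]
  gcongr with i
  exact_mod_cast hmn i

lemma natCast_mul_le_term_of_not_le {n : Fin k → ℕ} {N : ℕ} (hn : ¬n ≤ fun _ => N)
    (ε : ℝ≥0∞) : (N : ℝ≥0∞) * ε ≤ term c n fun _ => ε := by
  simp only [Pi.le_def, not_forall, not_le] at hn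
  obtain ⟨i, hi⟩ := hn
  calc (N : ℝ≥0∞) * ε ≤ (∑ j, n j : ℕ) * ε := by
        gcongr
        exact hi.le.trans (single_le_sum (fun j _ => Nat.zero_le (n j)) (mem_univ i))
    _ = ∑ j, (n j : ℝ≥0∞) * ε := by rw [Nat.cast_sum, sum_mul]
    _ ≤ term c n fun _ => ε := le_self_add

lemma exists_finset_dominating {ε : ℝ≥0∞} (hε0 : ε ≠ 0) (hεtop : ε ≠ ⊤) :
    ∃ F : Finset (Fin k → ℕ), ∀ n, c n ≠ ⊤ →
      ∃ m ∈ F, ∀ x, (fun _ => ε) ≤ x → term c m x ≤ term c n x := by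
  have hM : {m | Minimal (fun m => c m ≠ ⊤) m}.Finite :=
    WellQuasiOrderedLE.finite_of_isAntichain (setOfPred_minimal_antichain _)
  set B := hM.toFinset.sup fun m => term c m fun _ => ε
  have hB : B ≠ ⊤ := by
    refine ((Finset.sup_lt_iff ENNReal.zero_lt_top).2 fun m hm => ?_).ne
    exact (term_ne_top c (fun _ => hεtop) (Set.mem_ofPred.1 (hM.mem_toFinset.1 hm)).prop).lt_top
  obtain ⟨N, hN⟩ := ENNReal.exists_nat_mul_gt hε0 hB
  refine ⟨hM.toFinset ∪ Iic fun _ => N, fun n hn => ?_⟩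
  by_cases hbox : n ≤ fun _ => N
  · exact ⟨n, mem_union_right _ (mem_Iic.2 hbox), fun _ _ => le_rfl⟩
  obtain ⟨m, hmn, hm⟩ := exists_minimal_le_of_wellFoundedLT (fun m => c m ≠ ⊤) n hn
  have hmM : m ∈ hM.toFinset := hM.mem_toFinset.2 hm
  refine ⟨m, mem_union_left _ hmM, fun x hx => term_le_term_of_le c hmn hx ?_⟩
  calc term c m (fun _ => ε) ≤ B := Finset.le_sup (f := fun m => term c m fun _ => ε) hmM
    _ ≤ N * ε := hN.le
    _ ≤ term c n fun _ => ε := natCast_mul_le_term_of_not_le c hbox ε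

end TropicalPowerSeries

open TropicalPowerSeries in
/-- A tropical power series `f(x) = ⨅ n, (n·x + c n)` coincides on `[ε,∞]^k` with a
tropical polynomial `P(x) = min_{n ∈ F} (n·x + c n)` for some finite `F ⊆ ℕ^k`
(the min over the empty set being `∞`). -/
theorem tps_eq_polynomial_on_eps (k : ℕ) (c : (Fin k → ℕ) → ℝ≥0∞) (ε : ℝ≥0∞)
    (hε0 : 0 < ε) (hεtop : ε < ⊤) :
    ∃ F : Finset (Fin k → ℕ), ∀ x : Fin k → ℝ≥0∞, (∀ i, ε ≤ x i) →
      (⨅ n : Fin k → ℕ, (∑ i, (n i : ℝ≥0∞) * x i) + c n)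
        = F.inf (fun n => (∑ i, (n i : ℝ≥0∞) * x i) + c n) := by
  obtain ⟨F, hF⟩ := exists_finset_dominating c hε0.ne' hεtop.ne
  refine ⟨F, fun x hx => iInf_eq_finset_inf_of_forall_exists_le fun n hn => ?_⟩
  obtain ⟨m, hmF, hm⟩ := hF n fun hc => hn (term_eq_top c x hc)
  exact ⟨m, hmF, hm x hx⟩
end

section
/- Let f : [0,∞]^k → [0,∞] be a tropical power series with coefficient vector c : ℕ^k → [0,∞], and fix 0 < ε < ∞. Define F_ε = { n ∈ ℕ^k : c(n) < ∞ and for all m ≺ n, c(m) > c(n) + ε }. Then F_ε is finite. -/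
open scoped ENNReal

/-!
An infinite subset of a well-quasi-order contains a strictly increasing sequence `n₀ < n₁ < ⋯`.
On `F_ε` the coefficients then drop by more than `ε` at each step, so `c n_j + j ε ≤ c n₀ < ∞`
for all `j`, which is absurd because `ℝ≥0∞` is Archimedean.
-/

theorem Set.IsPWO.exists_strictMono_of_infinite {α : Type*} [PartialOrder α] {s : Set α}
    (hs : s.IsPWO) (hinf : s.Infinite) : ∃ f : ℕ → α, StrictMono f ∧ ∀ n, f n ∈ s := by
  let e := hinf.natEmbedding
  obtain ⟨g, hg⟩ := hs.exists_monotone_subseq (f := fun n ↦ (e n : α)) fun n ↦ (e n).2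
  have hinj : Function.Injective fun n ↦ (e (g n) : α) :=
    fun _ _ h ↦ g.injective (e.injective (Subtype.ext h))
  exact ⟨_, (monotone_nat_of_le_succ fun n ↦ hg (Nat.le_succ n)).strictMono_of_injective hinj,
    fun n ↦ (e (g n)).2⟩

theorem ENNReal.add_nat_mul_le_of_forall_succ_add_le {u : ℕ → ℝ≥0∞} {ε : ℝ≥0∞}
    (h : ∀ j, u (j + 1) + ε ≤ u j) (n : ℕ) : u n + n * ε ≤ u 0 := by
  induction n with
  | zero => simp
  | succ n ih =>
    calc u (n + 1) + (n + 1 : ℕ) * ε = u (n + 1) + ε + n * ε := by push_cast; ring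
      _ ≤ u n + n * ε := by gcongr; exact h n
      _ ≤ u 0 := ih

theorem ENNReal.not_forall_succ_add_le {u : ℕ → ℝ≥0∞} {ε : ℝ≥0∞} (hε : ε ≠ 0) (hu : u 0 ≠ ∞) :
    ¬ ∀ j, u (j + 1) + ε ≤ u j := fun h ↦ by
  obtain ⟨n, hn⟩ := ENNReal.exists_nat_mul_gt hε hu
  exact (le_add_self.trans (add_nat_mul_le_of_forall_succ_add_le h n)).not_gt hn

theorem Set.IsPWO.finite_of_forall_lt_add_le {α : Type*} [PartialOrder α] {s : Set α}
    (hs : s.IsPWO) {c : α → ℝ≥0∞} {ε : ℝ≥0∞} (hε : ε ≠ 0) (hc : ∀ n ∈ s, c n ≠ ∞)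
    (hgap : ∀ m ∈ s, ∀ n ∈ s, m < n → c n + ε ≤ c m) : s.Finite := by
  by_contra hinf
  obtain ⟨f, hf, hfs⟩ := hs.exists_strictMono_of_infinite hinf
  exact ENNReal.not_forall_succ_add_le (u := c ∘ f) hε (hc _ (hfs 0))
    fun j ↦ hgap _ (hfs j) _ (hfs (j + 1)) (hf j.lt_succ_self)

theorem F_eps_finite_general (k : ℕ) (c : (Fin k → ℕ) → ℝ≥0∞) (ε : ℝ≥0∞)
    (hε0 : 0 < ε) :
    {n : Fin k → ℕ | c n < ⊤ ∧ ∀ m : Fin k → ℕ, m < n → c n + ε < c m}.Finite :=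
  (Set.isPWO_of_wellQuasiOrderedLE _).finite_of_forall_lt_add_le hε0.ne' (fun _ hn ↦ hn.1.ne)
    fun _ _ _ hn hmn ↦ (hn.2 _ hmn).le

/-- The set `F_ε = { n ∈ ℕ^k : c n < ∞ and ∀ m ≺ n, c m > c n + ε }` is finite. -/
theorem F_eps_finite (k : ℕ) (c : (Fin k → ℕ) → ℝ≥0∞) (ε : ℝ≥0∞)
    (hε0 : 0 < ε) (hεtop : ε < ⊤) :
    {n : Fin k → ℕ | c n < ⊤ ∧ ∀ m : Fin k → ℕ, m < n → c n + ε < c m}.Finite :=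
  F_eps_finite_general k c ε hε0
end

section
/- Every tropical power series f : (0,∞)^k → [0,∞] (restricted to points where it is finite) is locally Lipschitz on (0,∞)^k. -/
open scoped ENNReal BigOperators

private lemma tps_key (k : ℕ) (c : (Fin k → ℕ) → ℝ≥0∞) (m B : ℝ)
    (hm : 0 < m) (hB : 0 ≤ B)
    (y z : Fin k → ℝ) (hz : ∀ i, m / 2 ≤ z i)
    (hFy : (⨅ n : Fin k → ℕ, ENNReal.ofReal (∑ i, (n i : ℝ) * y i) + c n) ≤
      ENNReal.ofReal B) :
    (⨅ n : Fin k → ℕ, ENNReal.ofReal (∑ i, (n i : ℝ) * y i) + c n) ≤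
      (⨅ n : Fin k → ℕ, ENNReal.ofReal (∑ i, (n i : ℝ) * z i) + c n) +
        ENNReal.ofReal ((B + 1) * (2 / m) * dist y z) := by
  rw [ENNReal.iInf_add]
  refine le_iInf fun n => ?_
  by_cases hcase : ∑ i, (n i : ℝ) * z i ≤ B + 1
  · -- the relevant indices: use Lipschitz bound on the linear form
    have hd : ∀ i, y i - z i ≤ dist y z := by
      intro i
      have h1 := dist_le_pi_dist y z i
      rw [Real.dist_eq] at h1
      have := (abs_le.mp h1).2
      linarith [le_abs_self (y i - z i)]
    have h1 : ∑ i, (n i : ℝ) * y i ≤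
        ∑ i, (n i : ℝ) * z i + (∑ i, (n i : ℝ)) * dist y z := by
      rw [Finset.sum_mul, ← Finset.sum_add_distrib]
      refine Finset.sum_le_sum fun i _ => ?_
      have h2 : (n i : ℝ) * (y i - z i) ≤ (n i : ℝ) * dist y z :=
        mul_le_mul_of_nonneg_left (hd i) (Nat.cast_nonneg _)
      nlinarith
    have hN : (∑ i, (n i : ℝ)) ≤ (B + 1) * (2 / m) := by
      have h2 : (∑ i, (n i : ℝ)) * (m / 2) ≤ ∑ i, (n i : ℝ) * z i := by
        rw [Finset.sum_mul]
        exact Finset.sum_le_sum fun i _ =>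
          mul_le_mul_of_nonneg_left (hz i) (Nat.cast_nonneg _)
      have h3 : (∑ i, (n i : ℝ)) * (m / 2) ≤ B + 1 := h2.trans hcase
      have hm2 : (0 : ℝ) < m / 2 := by linarith
      have h4 : (∑ i, (n i : ℝ)) ≤ (B + 1) / (m / 2) := (le_div_iff₀ hm2).mpr h3
      have h5 : (B + 1) / (m / 2) = (B + 1) * (2 / m) := by
        field_simp
      linarith [h4, h5.ge, h5.le]
    have hsum : ∑ i, (n i : ℝ) * y i ≤
        ∑ i, (n i : ℝ) * z i + (B + 1) * (2 / m) * dist y z := by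
      have := mul_le_mul_of_nonneg_right hN (dist_nonneg (x := y) (y := z))
      linarith
    refine le_trans (iInf_le _ n) ?_
    rw [add_right_comm]
    gcongr
    calc ENNReal.ofReal (∑ i, (n i : ℝ) * y i)
        ≤ ENNReal.ofReal (∑ i, (n i : ℝ) * z i + (B + 1) * (2 / m) * dist y z) :=
          ENNReal.ofReal_le_ofReal hsum
      _ ≤ _ := ENNReal.ofReal_add_le
  · -- irrelevant indices: the term is large anyway
    push_neg at hcase
    calc (⨅ n : Fin k → ℕ, ENNReal.ofReal (∑ i, (n i : ℝ) * y i) + c n)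
        ≤ ENNReal.ofReal B := hFy
      _ ≤ ENNReal.ofReal (∑ i, (n i : ℝ) * z i) :=
          ENNReal.ofReal_le_ofReal (by linarith)
      _ ≤ ENNReal.ofReal (∑ i, (n i : ℝ) * z i) + c n := le_self_add
      _ ≤ _ := le_self_add

/-- Every tropical power series is locally Lipschitz on `(0,∞)^k`, at every point
where it is finite. -/
theorem tps_locally_lipschitz (k : ℕ) (c : (Fin k → ℕ) → ℝ≥0∞)
    (x : Fin k → ℝ) (hx : ∀ i, 0 < x i)
    (hfin : (⨅ n : Fin k → ℕ, ENNReal.ofReal (∑ i, (n i : ℝ) * x i) + c n) ≠ ⊤) :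
    ∃ δ > (0 : ℝ), ∃ K : ℝ, 0 ≤ K ∧
      ∀ y z : Fin k → ℝ, (∀ i, 0 < y i) → (∀ i, 0 < z i) →
        dist y x ≤ δ → dist z x ≤ δ →
        |(⨅ n : Fin k → ℕ, ENNReal.ofReal (∑ i, (n i : ℝ) * y i) + c n).toReal -
          (⨅ n : Fin k → ℕ, ENNReal.ofReal (∑ i, (n i : ℝ) * z i) + c n).toReal|
          ≤ K * dist y z := by
  -- extract an index with finite coefficient
  obtain ⟨n₀, hn₀⟩ : ∃ n, ENNReal.ofReal (∑ i, (n i : ℝ) * x i) + c n ≠ ⊤ := by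
    by_contra h
    push_neg at h
    exact hfin (iInf_eq_top.mpr h)
  have hc₀ : c n₀ ≠ ⊤ := fun h => hn₀ (by simp [h])
  -- a uniform positive lower bound for the coordinates of x
  obtain ⟨m, hm, hmx⟩ : ∃ m > 0, ∀ i, m ≤ x i := by
    rcases isEmpty_or_nonempty (Fin k) with h | h
    · exact ⟨1, one_pos, fun i => (IsEmpty.false i).elim⟩
    · refine ⟨Finset.univ.inf' Finset.univ_nonempty x, ?_,
        fun i => Finset.inf'_le _ (Finset.mem_univ i)⟩
      exact (Finset.lt_inf'_iff _).mpr fun i _ => hx i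
  set C : ℝ≥0∞ := ENNReal.ofReal (∑ i, (n₀ i : ℝ) * (x i + m)) + c n₀ with hC
  have hCtop : C ≠ ⊤ := ENNReal.add_ne_top.mpr ⟨ENNReal.ofReal_ne_top, hc₀⟩
  set B : ℝ := C.toReal with hBdef
  have hB : 0 ≤ B := ENNReal.toReal_nonneg
  have hCB : ENNReal.ofReal B = C := ENNReal.ofReal_toReal hCtop
  refine ⟨m / 2, by linarith, (B + 1) * (2 / m), by positivity, ?_⟩
  intro y z hy0 hz0 hyx hzx
  -- coordinatewise bounds for points in the ball
  have hcoord : ∀ w : Fin k → ℝ, dist w x ≤ m / 2 →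
      (∀ i, m / 2 ≤ w i) ∧ (∀ i, w i ≤ x i + m) := by
    intro w hw
    refine ⟨fun i => ?_, fun i => ?_⟩ <;>
    · have h1 := dist_le_pi_dist w x i
      rw [Real.dist_eq] at h1
      obtain ⟨ha, hb⟩ := abs_le.mp (h1.trans hw)
      have := hmx i
      linarith
  obtain ⟨hylo, hyhi⟩ := hcoord y hyx
  obtain ⟨hzlo, hzhi⟩ := hcoord z hzx
  -- the uniform upper bound on the ball
  have hFbd : ∀ w : Fin k → ℝ, (∀ i, w i ≤ x i + m) →
      (⨅ n : Fin k → ℕ, ENNReal.ofReal (∑ i, (n i : ℝ) * w i) + c n) ≤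
        ENNReal.ofReal B := by
    intro w hw
    rw [hCB, hC]
    refine le_trans (iInf_le _ n₀) ?_
    gcongr with i
    exact hw i
  have hFy := hFbd y hyhi
  have hFz := hFbd z hzhi
  have hFytop : (⨅ n : Fin k → ℕ, ENNReal.ofReal (∑ i, (n i : ℝ) * y i) + c n) ≠ ⊤ :=
    ne_top_of_le_ne_top ENNReal.ofReal_ne_top hFy
  have hFztop : (⨅ n : Fin k → ℕ, ENNReal.ofReal (∑ i, (n i : ℝ) * z i) + c n) ≠ ⊤ :=
    ne_top_of_le_ne_top ENNReal.ofReal_ne_top hFz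
  have key1 := tps_key k c m B hm hB y z hzlo hFy
  have key2 := tps_key k c m B hm hB z y hylo hFz
  have hK1 : 0 ≤ (B + 1) * (2 / m) * dist y z := by positivity
  have hK2 : 0 ≤ (B + 1) * (2 / m) * dist z y := by positivity
  have t1 := ENNReal.toReal_mono
    (ENNReal.add_ne_top.mpr ⟨hFztop, ENNReal.ofReal_ne_top⟩) key1
  rw [ENNReal.toReal_add hFztop ENNReal.ofReal_ne_top, ENNReal.toReal_ofReal hK1] at t1
  have t2 := ENNReal.toReal_mono
    (ENNReal.add_ne_top.mpr ⟨hFytop, ENNReal.ofReal_ne_top⟩) key2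
  rw [ENNReal.toReal_add hFytop ENNReal.ofReal_ne_top, ENNReal.toReal_ofReal hK2,
    dist_comm z y] at t2
  rw [abs_sub_le_iff]
  constructor <;> linarith
end

section
/- Let P be a cancellative commutative monoid (written additively) ordered by x ≤ y iff ∃z, y = x + z, equipped with a monotone norm ‖·‖ : P → [0,∞] satisfying ‖x‖ = 0 → x = 0 and ‖x+y‖ ≤ ‖x‖+‖y‖, and suppose every norm-bounded directed net in P admits a supremum. If (vᵢ)_{i∈I} is a directed net in P with an upper bound v ∈ P and inf_{i∈I} ‖v − vᵢ‖ = 0, then the supremum ⋁ᵢ vᵢ exists and equals v. -/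
open scoped ENNReal

/-- In a normed cone (cancellative commutative monoid with cone order and monotone norm)
in which every norm-bounded directed set admits a supremum, a directed net with an
upper bound `v₀` such that `inf ‖v₀ − vᵢ‖ = 0` has supremum `v₀`. -/
theorem directed_net_sup_of_inf_norm_zero {P : Type*} [AddCancelCommMonoid P]
    [PartialOrder P] (hle : ∀ x y : P, x ≤ y ↔ ∃ z, y = x + z)
    (N : P → ℝ≥0∞)
    (hmono : ∀ x y : P, x ≤ y → N x ≤ N y)
    (hzero : ∀ x : P, N x = 0 → x = 0)
    (htri : ∀ x y : P, N (x + y) ≤ N x + N y)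
    (hcomplete : ∀ S : Set P, S.Nonempty → DirectedOn (· ≤ ·) S →
      (∃ B : ℝ≥0∞, B ≠ ⊤ ∧ ∀ x ∈ S, N x ≤ B) → ∃ u, IsLUB S u)
    {I : Type*} [Nonempty I] (v : I → P) (hdir : Directed (· ≤ ·) v)
    (v₀ : P) (hub : ∀ i, v i ≤ v₀)
    (hinf : ∀ ε : ℝ≥0∞, 0 < ε → ∃ i, ∃ z : P, v₀ = v i + z ∧ N z < ε) :
    IsLUB (Set.range v) v₀ := by
  -- pick i₀ with small remainder
  obtain ⟨i₀, z₁, hz₁, hz₁N⟩ := hinf 1 one_pos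
  -- the set of differences over the cofinal part above v i₀
  set S : Set P := {t : P | ∃ j, v i₀ ≤ v j ∧ v j = v i₀ + t} with hS
  have h0S : (0 : P) ∈ S := ⟨i₀, le_refl _, (add_zero _).symm⟩
  -- every element of S is ≤ z₁
  have hSz₁ : ∀ t ∈ S, t ≤ z₁ := by
    rintro t ⟨j, hij, hjt⟩
    obtain ⟨s, hs⟩ := (hle _ _).1 (hub j)
    rw [hle]
    refine ⟨s, ?_⟩
    have : v i₀ + z₁ = v i₀ + (t + s) := by
      rw [← add_assoc, ← hjt, ← hs, hz₁]
    exact add_left_cancel this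
  have hSbd : ∀ t ∈ S, N t ≤ 1 := fun t ht =>
    le_trans (hmono _ _ (hSz₁ t ht)) (le_of_lt hz₁N)
  -- S is directed
  have hSdir : DirectedOn (· ≤ ·) S := by
    rintro t₁ ⟨j₁, hij₁, hjt₁⟩ t₂ ⟨j₂, hij₂, hjt₂⟩
    obtain ⟨k', hk₁', hk₂'⟩ := hdir j₁ j₂
    obtain ⟨k, hk', hki₀⟩ := hdir k' i₀
    obtain ⟨t, ht⟩ := (hle _ _).1 (le_trans hij₁ (le_trans hk₁' hk'))
    refine ⟨t, ⟨k, le_trans hij₁ (le_trans hk₁' hk'), ht⟩, ?_, ?_⟩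
    · obtain ⟨d, hd⟩ := (hle _ _).1 (le_trans hk₁' hk')
      rw [hle]
      refine ⟨d, ?_⟩
      apply add_left_cancel (a := v i₀)
      rw [← add_assoc, ← hjt₁, ← hd, ht]
    · obtain ⟨d, hd⟩ := (hle _ _).1 (le_trans hk₂' hk')
      rw [hle]
      refine ⟨d, ?_⟩
      apply add_left_cancel (a := v i₀)
      rw [← add_assoc, ← hjt₂, ← hd, ht]
  obtain ⟨u, hu⟩ := hcomplete S ⟨0, h0S⟩ hSdir ⟨1, ENNReal.one_ne_top, hSbd⟩
  -- v₀ = v i₀ + u + z₀ for some z₀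
  have hvu : v i₀ + u ≤ v₀ := by
    -- v₀ is an upper bound of v i₀ + S, hence v₀ = v i₀ + r with u ≤ r... directly:
    -- show v₀ ∈ upperBounds (v i₀ + S) implies this; do it by hand.
    obtain ⟨r, hr⟩ := (hle _ _).1 (hub i₀)
    have hrub : r ∈ upperBounds S := by
      rintro t ⟨j, hij, hjt⟩
      obtain ⟨s, hs⟩ := (hle _ _).1 (hub j)
      rw [hle]
      refine ⟨s, ?_⟩
      apply add_left_cancel (a := v i₀)
      rw [← add_assoc, ← hjt, ← hs, hr]
    have hur : u ≤ r := hu.2 hrub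
    obtain ⟨d, hd⟩ := (hle _ _).1 hur
    rw [hle]
    exact ⟨d, by rw [hr, hd, add_assoc]⟩
  obtain ⟨z₀, hz₀⟩ := (hle _ _).1 hvu
  -- N z₀ < ε for all ε > 0
  have hz₀N : ∀ ε : ℝ≥0∞, 0 < ε → N z₀ < ε := by
    intro ε hε
    obtain ⟨i, z, hz, hzN⟩ := hinf ε hε
    obtain ⟨k', hki', hki₀'⟩ := hdir i i₀
    obtain ⟨t_k, htk⟩ := (hle _ _).1 hki₀'
    have htkS : t_k ∈ S := ⟨k', hki₀', htk⟩
    have htku : t_k ≤ u := hu.1 htkS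
    -- v k' ≤ v i₀ + u
    have hvk : v k' ≤ v i₀ + u := by
      obtain ⟨e, he⟩ := (hle _ _).1 htku
      rw [hle]
      exact ⟨e, by rw [htk, he, add_assoc]⟩
    obtain ⟨e, he⟩ := (hle _ _).1 hvk
    -- v₀ = v k' + s with s ≤ z
    obtain ⟨d, hd⟩ := (hle _ _).1 hki'
    -- v₀ = v i + z = v k' + ? ; also v₀ = v i₀ + u + z₀ = v k' + e + z₀
    have key : v k' + (e + z₀) = v i + z := by
      rw [← hz, hz₀, he, add_assoc]
    have key2 : v i + (d + (e + z₀)) = v i + z := by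
      rw [← add_assoc, ← hd, key]
    have hzeq : z = d + (e + z₀) := (add_left_cancel key2).symm
    have hz₀z : z₀ ≤ z := by
      rw [hle]
      exact ⟨d + e, by rw [hzeq]; abel⟩
    exact lt_of_le_of_lt (hmono _ _ hz₀z) hzN
  have hz₀0 : z₀ = 0 := by
    apply hzero
    by_contra h
    exact absurd (hz₀N (N z₀) (pos_iff_ne_zero.2 h)) (lt_irrefl _)
  have hv₀ : v₀ = v i₀ + u := by rw [hz₀, hz₀0, add_zero]
  constructor
  · rintro x ⟨i, rfl⟩; exact hub i
  · -- least upper bound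
    rintro w hw
    -- w is an upper bound of range v; so of {v j : v i₀ ≤ v j}
    obtain ⟨r, hr⟩ := (hle _ _).1 (hw ⟨i₀, rfl⟩)
    have hrub : r ∈ upperBounds S := by
      rintro t ⟨j, hij, hjt⟩
      obtain ⟨s, hs⟩ := (hle _ _).1 (hw ⟨j, rfl⟩)
      rw [hle]
      refine ⟨s, ?_⟩
      apply add_left_cancel (a := v i₀)
      rw [← add_assoc, ← hjt, ← hs, hr]
    have hur : u ≤ r := hu.2 hrub
    obtain ⟨d, hd⟩ := (hle _ _).1 hur
    rw [hle]
    exact ⟨d, by rw [hr, hd, hv₀, add_assoc]⟩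
end
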